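/- Let z₁, …, z_n ∈ 𝔻 (n ≥ 1) satisfy |z_k| ≤ ((1 − |z_n|)/(4(n−1))) · (1 − d(z_k, z_n)) for k = 1, …, n−1, where d is the pseudo-hyperbolic distance. Then the function f(ζ) = ζ^{1−n} ∏_{k=1}^{n} (ζ − z_k)/(1 − conj(z_k) ζ) restricted to 𝕋 is a sense-preserving circle homeomorphism. -/

import Mathlib

open Complex MeasureTheory ComplexConjugate

/-!
Write `w = 1 - conj z * e^{iθ}`. Since `|e^{iθ}| = 1`, each factor is
`(e^{iθ} - z)/(1 - conj z * e^{iθ}) = e^{iθ} * conj w / w`, and `w` lies in the right half-plane, so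
the factor equals `exp (i (θ + φ_z θ))` with the smooth `2π`-periodic phase `φ_z θ = -2 Im (log w)`.
Hence `F θ = θ + ∑ φ_{z_k} θ` is a degree-one lift of `f`. With `a = conj z * e^{iθ}` one finds
`1 + φ_z' = Re ((1 + a)/(1 - a))`, the Poisson kernel, which is at least `(1 - |z|)/(1 + |z|)`.
The factor at `z_n` thus contributes at least `(1 - |z_n|)/(1 + |z_n|) > (1 - |z_n|)/2` to `F'`,
while by hypothesis each of the other `n - 1` phases has derivative at least
`-2 |z_k| ≥ -(1 - |z_n|)/(2(n - 1))`; so `F' > 0`.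
-/

/-- A sense-preserving homeomorphism of the unit circle, described via a continuous
strictly increasing degree-one lift. -/
def CirclePosHomeo (f : ℂ → ℂ) : Prop :=
  ∃ F : ℝ → ℝ, Continuous F ∧ StrictMono F ∧
    (∀ θ, F (θ + 2 * Real.pi) = F θ + 2 * Real.pi) ∧
    ∀ θ : ℝ, f (Complex.exp (θ * Complex.I)) = Complex.exp (F θ * Complex.I)

/-- The pseudo-hyperbolic distance on the unit disk. -/
noncomputable def pseudoDist (z w : ℂ) : ℝ := ‖(z - w) / (1 - z * conj w)‖

lemma CirclePosHomeo.of_hasDerivAt {f : ℂ → ℂ} {F F' : ℝ → ℝ}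
    (hF : ∀ θ, HasDerivAt F (F' θ) θ) (hF' : ∀ θ, 0 < F' θ)
    (hper : ∀ θ, F (θ + 2 * Real.pi) = F θ + 2 * Real.pi)
    (hf : ∀ θ : ℝ, f (exp (θ * I)) = exp (F θ * I)) : CirclePosHomeo f :=
  ⟨F, continuous_iff_continuousAt.2 fun θ => (hF θ).continuousAt,
    strictMono_of_hasDerivAt_pos hF hF', hper, hf⟩

lemma neg_div_one_add_norm_le_re_div_one_sub {a : ℂ} (ha : ‖a‖ < 1) :
    -(‖a‖ / (1 + ‖a‖)) ≤ (a / (1 - a)).re := by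
  have hsq : ‖a‖ ^ 2 = a.re ^ 2 + a.im ^ 2 := by rw [Complex.sq_norm, normSq_apply]; ring
  have hD : normSq (1 - a) = 1 - 2 * a.re + ‖a‖ ^ 2 := by
    rw [normSq_apply, hsq]; simp only [sub_re, one_re, sub_im, one_im]; ring
  have hre : -‖a‖ ≤ a.re := neg_le_of_abs_le (abs_re_le_norm a)
  have hDpos : 0 < normSq (1 - a) :=
    normSq_pos.2 (sub_ne_zero.2 fun h => by simp [← h] at ha)
  have hquot : (a / (1 - a)).re = (a.re - ‖a‖ ^ 2) / normSq (1 - a) := by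
    rw [div_re, ← add_div, hsq]; simp only [sub_re, one_re, sub_im, one_im]; ring
  rw [hquot, le_div_iff₀ hDpos, hD, neg_mul, neg_le, div_mul_eq_mul_div, le_div_iff₀ (by positivity)]
  -- after clearing denominators the claim is `0 ≤ (1 - ‖a‖) * (a.re + ‖a‖)`
  nlinarith [mul_nonneg (sub_nonneg.2 ha.le) (neg_le_iff_add_nonneg.1 hre)]

lemma one_sub_conj_mul_mem_slitPlane {z ζ : ℂ} (hz : ‖z‖ < 1) (hζ : ‖ζ‖ = 1) :
    1 - conj z * ζ ∈ slitPlane := by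
  rw [sub_eq_add_neg]
  exact mem_slitPlane_of_norm_lt_one (by rwa [norm_neg, norm_mul, hζ, mul_one, norm_conj])

noncomputable def blaschkePhase (z : ℂ) (θ : ℝ) : ℝ :=
  -2 * (log (1 - conj z * exp (θ * I))).im

lemma blaschkePhase_add_two_pi (z : ℂ) (θ : ℝ) :
    blaschkePhase z (θ + 2 * Real.pi) = blaschkePhase z θ := by
  simp only [blaschkePhase, ofReal_add, ofReal_mul, ofReal_ofNat, add_mul, exp_add,
    exp_two_pi_mul_I, mul_one]

lemma sub_div_one_sub_conj_mul_eq_exp {z : ℂ} (hz : ‖z‖ < 1) (θ : ℝ) :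
    (exp (θ * I) - z) / (1 - conj z * exp (θ * I)) =
      exp ((θ + blaschkePhase z θ : ℝ) * I) := by
  set e := exp (θ * I)
  set w := 1 - conj z * e
  have he : ‖e‖ = 1 := norm_exp_ofReal_mul_I θ
  have hw : w ≠ 0 := slitPlane_ne_zero (one_sub_conj_mul_mem_slitPlane hz he)
  have hnum : e - z = e * conj w := by
    have : e * conj e = 1 := by rw [mul_conj, normSq_eq_norm_sq, he]; simp
    simp only [w, map_sub, map_one, map_mul, conj_conj]
    linear_combination z * this
  have hconj : conj w = w * exp ((blaschkePhase z θ : ℝ) * I) := by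
    conv_lhs => rw [← exp_log hw, ← exp_conj]
    conv_rhs => rw [← exp_log hw, ← exp_add]
    congr 1
    apply Complex.ext
    · simp
    · simp [blaschkePhase]; ring
  rw [hnum, hconj, div_eq_iff hw, ofReal_add, add_mul, exp_add]
  ring

noncomputable def blaschkePhaseDeriv (z : ℂ) (θ : ℝ) : ℝ :=
  2 * (conj z * exp (θ * I) / (1 - conj z * exp (θ * I))).re

lemma hasDerivAt_blaschkePhase {z : ℂ} (hz : ‖z‖ < 1) (θ : ℝ) :
    HasDerivAt (blaschkePhase z) (blaschkePhaseDeriv z θ) θ := by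
  have hw : HasDerivAt (fun t : ℝ => 1 - conj z * exp (t * I))
      (-(conj z * (exp (θ * I) * (1 * I)))) θ :=
    (((ofRealCLM.hasDerivAt).mul_const I).cexp.const_mul _).const_sub 1
  have hlog := hw.clog_real (one_sub_conj_mul_mem_slitPlane hz (norm_exp_ofReal_mul_I θ))
  refine ((imCLM.hasFDerivAt.comp_hasDerivAt θ hlog).const_mul (-2)).congr_deriv ?_
  have : -(conj z * (exp (θ * I) * (1 * I))) / (1 - conj z * exp (θ * I)) =
      -(conj z * exp (θ * I) / (1 - conj z * exp (θ * I)) * I) := by ring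
  rw [blaschkePhaseDeriv, imCLM_apply, this, neg_im, mul_I_im]
  ring

lemma neg_two_mul_div_le_blaschkePhaseDeriv {z : ℂ} (hz : ‖z‖ < 1) (θ : ℝ) :
    -(2 * (‖z‖ / (1 + ‖z‖))) ≤ blaschkePhaseDeriv z θ := by
  have ha : ‖conj z * exp (θ * I)‖ = ‖z‖ := by
    rw [norm_mul, norm_conj, norm_exp_ofReal_mul_I, mul_one]
  have := neg_div_one_add_norm_le_re_div_one_sub (ha ▸ hz)
  rw [ha] at this
  unfold blaschkePhaseDeriv
  linarith

lemma zpow_mul_prod_blaschke_eq_exp {n : ℕ} {z : Fin n → ℂ} (hz : ∀ k, ‖z k‖ < 1) (θ : ℝ) :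
    exp (θ * I) ^ ((1 : ℤ) - n) * ∏ k, (exp (θ * I) - z k) / (1 - conj (z k) * exp (θ * I)) =
      exp ((θ + ∑ k, blaschkePhase (z k) θ : ℝ) * I) := by
  simp_rw [sub_div_one_sub_conj_mul_eq_exp (hz _), ← exp_sum, ← exp_int_mul, ← exp_add]
  push_cast
  simp only [add_mul, Finset.sum_add_distrib, Finset.sum_const, Finset.card_univ, Fintype.card_fin,
    nsmul_eq_mul, Finset.sum_mul]
  ring_nf

open Finset in
lemma sum_erase_le_of_le_div {ι : Type*} [Fintype ι] [DecidableEq ι] (m : ι) {t : ι → ℝ} {c : ℝ}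
    (hc : 0 ≤ c) (ht : ∀ k ≠ m, t k ≤ c / (Fintype.card ι - 1)) :
    ∑ k ∈ univ.erase m, t k ≤ c := by
  have hcard : ((univ.erase m).card : ℝ) = Fintype.card ι - 1 := by
    rw [card_erase_of_mem (mem_univ m), card_univ, Nat.cast_pred (Fintype.card_pos_iff.2 ⟨m⟩)]
  calc ∑ k ∈ univ.erase m, t k ≤ (univ.erase m).card • (c / (Fintype.card ι - 1)) :=
        sum_le_card_nsmul _ _ _ fun k hk => ht k (ne_of_mem_erase hk)
    _ ≤ c := by
        rw [nsmul_eq_mul, hcard]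
        rcases eq_or_ne ((Fintype.card ι : ℝ) - 1) 0 with h | h
        · simp [h, hc]
        · rw [mul_div_cancel₀ _ h]

open Finset in
lemma one_add_sum_pos_of_dominant {ι : Type*} [Fintype ι] [DecidableEq ι] (m : ι) {p t : ι → ℝ}
    (ht₀ : ∀ k, 0 ≤ t k) (hm : t m < 1) (hp : ∀ k, -(2 * (t k / (1 + t k))) ≤ p k)
    (ht : ∑ k ∈ univ.erase m, t k ≤ (1 - t m) / 4) :
    0 < 1 + ∑ k, p k := by
  have hrest : -(2 * ∑ k ∈ univ.erase m, t k) ≤ ∑ k ∈ univ.erase m, p k := by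
    rw [mul_sum, ← sum_neg_distrib]
    refine sum_le_sum fun k _ => le_trans ?_ (hp k)
    gcongr
    exact div_le_self (ht₀ k) (by linarith [ht₀ k])
  have hlead : (1 - t m) / 2 < 1 - 2 * (t m / (1 + t m)) := by
    have := ht₀ m
    rw [show 1 - 2 * (t m / (1 + t m)) = (1 - t m) / (1 + t m) by field_simp; ring]
    exact div_lt_div_of_pos_left (by linarith) (by linarith) (by linarith)
  rw [← add_sum_erase _ _ (mem_univ m)]
  linarith [hp m]

/-- if `|z_k| ≤ ((1 − |z_n|)/(4(n−1)))(1 − d(z_k, z_n))` for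
`k = 1,…,n−1`, then `ζ ↦ ζ^{1−n} ∏ (ζ − z_k)/(1 − conj(z_k) ζ)` is a circle
homeomorphism. -/
theorem blaschke_over_monomial_circle_homeo
    (n : ℕ) (hn : 1 ≤ n) (z : Fin n → ℂ) (hz : ∀ k, ‖z k‖ < 1)
    (hcond : ∀ k : Fin n, (k : ℕ) + 1 < n →
      ‖z k‖ ≤ (1 - ‖z ⟨n - 1, by omega⟩‖) / (4 * ((n : ℝ) - 1)) *
        (1 - pseudoDist (z k) (z ⟨n - 1, by omega⟩)))
    (f : ℂ → ℂ)
    (hf : ∀ ζ : ℂ, f ζ = ζ ^ ((1 : ℤ) - (n : ℤ)) * ∏ k, (ζ - z k) / (1 - conj (z k) * ζ)) :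
    CirclePosHomeo f := by
  set m : Fin n := ⟨n - 1, by omega⟩
  have hsmall : ∀ k ≠ m, ‖z k‖ ≤ (1 - ‖z m‖) / 4 / (Fintype.card (Fin n) - 1) := by
    intro k hk
    have hlt : (k : ℕ) + 1 < n := by
      have : (k : ℕ) ≠ n - 1 := fun h => hk (Fin.ext h)
      omega
    have hn' : (1 : ℝ) ≤ n := by exact_mod_cast hn
    have hcoef : 0 ≤ (1 - ‖z m‖) / (4 * ((n : ℝ) - 1)) :=
      div_nonneg (by linarith [hz m]) (by linarith)
    have hd : 0 ≤ pseudoDist (z k) (z m) := norm_nonneg _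
    rw [Fintype.card_fin, div_div]
    exact (hcond k hlt).trans (mul_le_of_le_one_right hcoef (by linarith))
  refine CirclePosHomeo.of_hasDerivAt
    (fun θ => (hasDerivAt_id θ).add
      (HasDerivAt.fun_sum fun k _ => hasDerivAt_blaschkePhase (hz k) θ))
    (fun θ => one_add_sum_pos_of_dominant m (fun k => norm_nonneg (z k)) (hz m)
      (fun k => neg_two_mul_div_le_blaschkePhaseDeriv (hz k) θ)
      (sum_erase_le_of_le_div m (by linarith [hz m]) hsmall))
    (fun θ => ?_) (fun θ => ?_)
  · simp only [Pi.add_apply, id, blaschkePhase_add_two_pi]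
    ring
  · rw [hf, zpow_mul_prod_blaschke_eq_exp hz]
    rfl
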